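/- (Reflection of a plane wave moving down the x³-axis.) Let F₀ : ℂ → ℂ and r₀ : ℂ → ℝ, let ξ ∈ ℂ with ξ ≠ 0, and set ξ₀ = (−1 + √(1 + ξξ̄))/ξ̄ and F₂(ξ) = (1/4)((1 + √(1 + ξξ̄))²·F₀(ξ₀) − ξ²·conj(F₀(ξ₀)) − 2ξ√(1 + ξξ̄)·r₀(ξ₀)). Then: (a) ξ·(1 − ξ₀ξ̄₀) = 2ξ₀, so u(ξ) = (0,−1) − 2⟨(0,−1), u(ξ₀)⟩·u(ξ₀), i.e. ξ is the mirror reflection of the downward vertical direction in the normal u(ξ₀); and (b) F₂(ξ) = (1/2)(z₀ − 2t₀ξ − z̄₀ξ²) where (z₀,t₀) = P(ξ₀, F₀(ξ₀), r₀(ξ₀)), i.e. the reflected line with direction ξ and twistor coordinate F₂(ξ) passes through the point of the surface with normal direction ξ₀. -/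

import Mathlib

open ComplexConjugate

/-- The point of `ℝ³ = ℂ × ℝ` on the oriented line with twistor data `(ξ, η)`
at signed distance `r` from the point of the line closest to the origin. -/
noncomputable def twistorPoint (ξ η : ℂ) (r : ℝ) : ℂ × ℝ :=
  ((2 * (η - conj η * ξ ^ 2) + 2 * ξ * (1 + ξ * conj ξ) * (r : ℂ)) / (1 + ξ * conj ξ) ^ 2,
   (((-2 * (η * conj ξ + conj η * ξ) + (1 - ξ ^ 2 * (conj ξ) ^ 2) * (r : ℂ)) /
      (1 + ξ * conj ξ) ^ 2).re))

/-- The unit vector in `ℝ³ = ℂ × ℝ` obtained from `ξ ∈ ℂ` by inverse stereographic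
projection from the south pole of the unit sphere. -/
noncomputable def stereoDir (ξ : ℂ) : ℂ × ℝ :=
  (2 * ξ / (1 + ξ * conj ξ), (1 - Complex.normSq ξ) / (1 + Complex.normSq ξ))

/-- The Euclidean inner product on `ℝ³ = ℂ × ℝ`. -/
noncomputable def euclInner (p q : ℂ × ℝ) : ℝ :=
  (p.1 * conj q.1).re + p.2 * q.2

/-!
Put `s = √(1 + ξξ̄)`. Since `(s - 1)(s + 1) = ξξ̄`, the direction `ξ₀` equals `ξ / (s + 1)`, so
`ξ₀ξ̄₀ = (s - 1)/(s + 1)` and `ξ = 2ξ₀ / (1 - ξ₀ξ̄₀)`. For any `ξ₀` off the unit circle this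
relation makes `u(ξ)` the mirror image of `(0, -1)` in `u(ξ₀)`, and the line in direction `ξ`
through `P(ξ₀, η, r)` has twistor coordinate `(η - ξ₀²η̄ - ξ₀(1 + ξ₀ξ̄₀)r) / (1 - ξ₀ξ̄₀)²`;
substituting `ξ₀ = ξ / (s + 1)` turns the latter into `F₂(ξ)`.
-/

theorem one_add_mul_conj_ne_zero (z : ℂ) : 1 + z * conj z ≠ 0 := by
  rw [Complex.mul_conj]
  exact_mod_cast (add_pos_of_pos_of_nonneg one_pos (Complex.normSq_nonneg z)).ne'

theorem stereoDir_eq_reflection_down {ξ₀ ξ : ℂ} (hn : Complex.normSq ξ₀ ≠ 1)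
    (hξ : ξ * (1 - ξ₀ * conj ξ₀) = 2 * ξ₀) :
    stereoDir ξ = ((0 : ℂ), (-1 : ℝ)) -
      (2 * euclInner ((0 : ℂ), (-1 : ℝ)) (stereoDir ξ₀)) • stereoDir ξ₀ := by
  rw [Complex.mul_conj] at hξ
  have h1n : (1 - Complex.normSq ξ₀ : ℂ) ≠ 0 := by exact_mod_cast sub_ne_zero.mpr hn.symm
  have hN : Complex.normSq ξ * (1 - Complex.normSq ξ₀) ^ 2 = 4 * Complex.normSq ξ₀ := by
    have h := congrArg Complex.normSq hξ
    rw [← Complex.ofReal_one, ← Complex.ofReal_sub, Complex.normSq_mul, Complex.normSq_mul,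
      Complex.normSq_ofReal, Complex.normSq_ofNat] at h
    linear_combination h
  have hN1 : (1 + Complex.normSq ξ : ℂ) ≠ 0 := Complex.mul_conj ξ ▸ one_add_mul_conj_ne_zero ξ
  have hn1 : (1 + Complex.normSq ξ₀ : ℂ) ≠ 0 := Complex.mul_conj ξ₀ ▸ one_add_mul_conj_ne_zero ξ₀
  rw [← eq_div_iff h1n] at hξ
  simp only [stereoDir, euclInner, Complex.mul_conj, zero_mul, Complex.zero_re]
  generalize Complex.normSq ξ₀ = n at *
  generalize Complex.normSq ξ = N at *
  refine Prod.ext ?_ ?_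
  · simp only [Prod.fst_sub, Prod.smul_fst, Complex.real_smul, hξ]
    push_cast
    field_simp
    have hN : (N : ℂ) * (1 - n) ^ 2 = 4 * n := by exact_mod_cast hN
    linear_combination (-4 * ξ₀) * hN
  · have hN1 : 1 + N ≠ 0 := by exact_mod_cast hN1
    have hn1 : 1 + n ≠ 0 := by exact_mod_cast hn1
    simp only [Prod.snd_sub, Prod.smul_snd, smul_eq_mul]
    field_simp
    linear_combination (-2) * hN

/-- The twistor coordinate of the oriented line with direction `ξ` through the point `p`. -/
noncomputable def twistorCoord (ξ : ℂ) (p : ℂ × ℝ) : ℂ :=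
  (1 / 2) * (p.1 - 2 * (p.2 : ℂ) * ξ - conj p.1 * ξ ^ 2)

theorem ofReal_twistorPoint_snd (ξ η : ℂ) (r : ℝ) :
    ((twistorPoint ξ η r).2 : ℂ) =
      (-2 * (η * conj ξ + conj η * ξ) + (1 - ξ ^ 2 * (conj ξ) ^ 2) * (r : ℂ)) /
        (1 + ξ * conj ξ) ^ 2 :=
  Complex.conj_eq_iff_re.mp (by simp only [map_div₀, map_add, map_mul, map_sub, map_pow,
    map_neg, map_one, map_ofNat, Complex.conj_conj, Complex.conj_ofReal]; ring)

theorem twistorCoord_twistorPoint_of_reflect {ξ₀ ξ : ℂ} (η : ℂ) (r : ℝ)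
    (hn : Complex.normSq ξ₀ ≠ 1) (hξ : ξ * (1 - ξ₀ * conj ξ₀) = 2 * ξ₀) :
    twistorCoord ξ (twistorPoint ξ₀ η r) =
      (η - ξ₀ ^ 2 * conj η - ξ₀ * (1 + ξ₀ * conj ξ₀) * r) / (1 - ξ₀ * conj ξ₀) ^ 2 := by
  have h1n : 1 - ξ₀ * conj ξ₀ ≠ 0 := by
    rw [Complex.mul_conj]; exact_mod_cast sub_ne_zero.mpr hn.symm
  have h1n' := one_add_mul_conj_ne_zero ξ₀
  rw [← eq_div_iff h1n] at hξ
  subst hξ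
  simp only [twistorCoord, ofReal_twistorPoint_snd]
  simp only [twistorPoint, map_div₀, map_add, map_mul, map_sub, map_pow,
    map_one, map_ofNat, Complex.conj_conj, Complex.conj_ofReal]
  field_simp
  ring

theorem neg_one_add_div_conj_eq_div_add_one {ξ w : ℂ} (hw : w ^ 2 = 1 + ξ * conj ξ)
    (hw1 : w + 1 ≠ 0) : (-1 + w) / conj ξ = ξ / (w + 1) := by
  rcases eq_or_ne ξ 0 with rfl | hξ
  · simp
  · rw [div_eq_div_iff ((map_ne_zero _).mpr hξ) hw1]
    linear_combination hw

theorem plane_wave_down_x3_reflection_general (F₀ : ℂ → ℂ) (r₀ : ℂ → ℝ) (ξ : ℂ)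
    (ξ₀ : ℂ)
    (hξ₀ : ξ₀ = (-1 + (Real.sqrt (1 + Complex.normSq ξ) : ℂ)) / conj ξ)
    (F₂ξ : ℂ)
    (hF₂ : F₂ξ = (1 / 4) * ((1 + (Real.sqrt (1 + Complex.normSq ξ) : ℂ)) ^ 2 * F₀ ξ₀ -
      ξ ^ 2 * conj (F₀ ξ₀) -
      2 * ξ * (Real.sqrt (1 + Complex.normSq ξ) : ℂ) * (r₀ ξ₀ : ℂ))) :
    (ξ * (1 - ξ₀ * conj ξ₀) = 2 * ξ₀ ∧
      stereoDir ξ = ((0 : ℂ), (-1 : ℝ)) -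
        (2 * euclInner ((0 : ℂ), (-1 : ℝ)) (stereoDir ξ₀)) • stereoDir ξ₀) ∧
    F₂ξ = (1 / 2) * ((twistorPoint ξ₀ (F₀ ξ₀) (r₀ ξ₀)).1 -
      2 * ((twistorPoint ξ₀ (F₀ ξ₀) (r₀ ξ₀)).2 : ℂ) * ξ -
      conj ((twistorPoint ξ₀ (F₀ ξ₀) (r₀ ξ₀)).1) * ξ ^ 2) := by
  set s := Real.sqrt (1 + Complex.normSq ξ)
  have hs : (s : ℂ) ^ 2 = 1 + ξ * conj ξ := by
    rw [Complex.mul_conj]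
    exact_mod_cast Real.sq_sqrt (add_nonneg zero_le_one (Complex.normSq_nonneg ξ))
  have hs1 : (s : ℂ) + 1 ≠ 0 := by
    exact_mod_cast (add_pos_of_nonneg_of_pos (Real.sqrt_nonneg _) one_pos).ne'
  rw [neg_one_add_div_conj_eq_div_add_one hs hs1] at hξ₀
  have hnorm : ξ₀ * conj ξ₀ = (s - 1) / (s + 1) := by
    rw [hξ₀, map_div₀, map_add, map_one, Complex.conj_ofReal, div_mul_div_comm,
      div_eq_div_iff (mul_ne_zero hs1 hs1) hs1]
    linear_combination (-(s + 1) : ℂ) * hs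
  have hrefl : ξ * (1 - ξ₀ * conj ξ₀) = 2 * ξ₀ := by
    rw [hnorm, hξ₀]; field_simp; ring
  have hn : Complex.normSq ξ₀ ≠ 1 := by
    intro h
    have h' : ((s : ℂ) - 1) / (s + 1) = 1 := by
      rw [← hnorm, Complex.mul_conj, h, Complex.ofReal_one]
    rw [div_eq_one_iff_eq hs1] at h'
    exact two_ne_zero (by linear_combination -h' : (2 : ℂ) = 0)
  refine ⟨⟨hrefl, stereoDir_eq_reflection_down hn hrefl⟩, ?_⟩
  change _ = twistorCoord ξ (twistorPoint ξ₀ (F₀ ξ₀) (r₀ ξ₀))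
  rw [twistorCoord_twistorPoint_of_reflect _ _ hn hrefl, hF₂, hnorm, hξ₀]
  field_simp
  ring

/-- Reflection of a plane wave moving down the x³-axis: with
`ξ₀ = (−1 + √(1 + ξξ̄))/ξ̄` and
`F₂(ξ) = ¼((1 + √(1 + ξξ̄))²F₀(ξ₀) − ξ²·conj(F₀(ξ₀)) − 2ξ√(1 + ξξ̄)·r₀(ξ₀))`:
(a) `ξ` is the mirror reflection of the downward vertical direction `(0, −1)` in the
normal `stereoDir ξ₀`, and (b) the reflected line with direction `ξ` and twistor
coordinate `F₂(ξ)` passes through the surface point `twistorPoint ξ₀ (F₀ ξ₀) (r₀ ξ₀)`. -/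
theorem plane_wave_down_x3_reflection (F₀ : ℂ → ℂ) (r₀ : ℂ → ℝ) (ξ : ℂ) (hξ : ξ ≠ 0)
    (ξ₀ : ℂ)
    (hξ₀ : ξ₀ = (-1 + (Real.sqrt (1 + Complex.normSq ξ) : ℂ)) / conj ξ)
    (F₂ξ : ℂ)
    (hF₂ : F₂ξ = (1 / 4) * ((1 + (Real.sqrt (1 + Complex.normSq ξ) : ℂ)) ^ 2 * F₀ ξ₀ -
      ξ ^ 2 * conj (F₀ ξ₀) -
      2 * ξ * (Real.sqrt (1 + Complex.normSq ξ) : ℂ) * (r₀ ξ₀ : ℂ))) :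
    (ξ * (1 - ξ₀ * conj ξ₀) = 2 * ξ₀ ∧
      stereoDir ξ = ((0 : ℂ), (-1 : ℝ)) -
        (2 * euclInner ((0 : ℂ), (-1 : ℝ)) (stereoDir ξ₀)) • stereoDir ξ₀) ∧
    F₂ξ = (1 / 2) * ((twistorPoint ξ₀ (F₀ ξ₀) (r₀ ξ₀)).1 -
      2 * ((twistorPoint ξ₀ (F₀ ξ₀) (r₀ ξ₀)).2 : ℂ) * ξ -
      conj ((twistorPoint ξ₀ (F₀ ξ₀) (r₀ ξ₀)).1) * ξ ^ 2) :=
  plane_wave_down_x3_reflection_general F₀ r₀ ξ ξ₀ hξ₀ F₂ξ hF₂
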